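/- arXiv:math/0604394 — 7 statements merged into one kernel-verified Lean document; each statement's English description precedes it below -/
import Mathlib

section
/- Let g be a Lie algebra over ℂ, h ⊆ g a Lie subalgebra, and m⁺, m⁻ ⊆ g subspaces such that g = h ⊕ m⁺ ⊕ m⁻ is an internal direct sum of vector spaces, with ⁅h, m⁺⁆ ⊆ m⁺ and ⁅h, m⁻⁆ ⊆ m⁻. Let ω ∈ ℂ be a primitive cube root of unity and let f : g → g be the linear map equal to the identity on h, to ω·id on m⁺, and to ω²·id on m⁻. Then f is a Lie algebra automorphism of g (i.e. f⁅x,y⁆ = ⁅f x, f y⁆ for all x, y ∈ g) if and only if ⁅m⁺, m⁺⁆ ⊆ m⁻, ⁅m⁻, m⁻⁆ ⊆ m⁺, and ⁅m⁺, m⁻⁆ ⊆ h. -/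
/-- the linear map equal to the identity on `h`, to `ω·id` on `m⁺` and to
`ω²·id` on `m⁻` (where `g = h ⊕ m⁺ ⊕ m⁻` and `ω` is a primitive cube root of unity) is a
Lie algebra automorphism iff `⁅m⁺,m⁺⁆ ⊆ m⁻`, `⁅m⁻,m⁻⁆ ⊆ m⁺` and `⁅m⁺,m⁻⁆ ⊆ h`. -/
theorem stmt_0 (g : Type*) [LieRing g] [LieAlgebra ℂ g]
    (h : LieSubalgebra ℂ g) (mp mm : Submodule ℂ g)
    (hds : DirectSum.IsInternal (fun i : Fin 3 => ![h.toSubmodule, mp, mm] i))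
    (hhp : ∀ x ∈ h, ∀ y ∈ mp, ⁅x, y⁆ ∈ mp)
    (hhm : ∀ x ∈ h, ∀ y ∈ mm, ⁅x, y⁆ ∈ mm)
    (ω : ℂ) (hω3 : ω ^ 3 = 1) (hω1 : ω ≠ 1)
    (f : g →ₗ[ℂ] g)
    (hfh : ∀ x ∈ h, f x = x)
    (hfp : ∀ x ∈ mp, f x = ω • x)
    (hfm : ∀ x ∈ mm, f x = ω ^ 2 • x) :
    (∀ x y : g, f ⁅x, y⁆ = ⁅f x, f y⁆) ↔
      ((∀ x ∈ mp, ∀ y ∈ mp, ⁅x, y⁆ ∈ mm) ∧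
       (∀ x ∈ mm, ∀ y ∈ mm, ⁅x, y⁆ ∈ mp) ∧
       (∀ x ∈ mp, ∀ y ∈ mm, ⁅x, y⁆ ∈ h)) := by
  -- basic facts about ω
  have hω0 : ω ≠ 0 := by
    intro h0; rw [h0] at hω3; norm_num at hω3
  have hω2 : ω ^ 2 ≠ 1 := by
    intro h2
    apply hω1
    have : ω ^ 3 = ω := by rw [pow_succ, h2, one_mul]
    rw [this] at hω3; exact hω3
  have hωω2 : ω ≠ ω ^ 2 := by
    intro he
    apply hω2
    calc ω ^ 2 = ω * ω := sq ω
    _ = ω ^ 2 * ω := by rw [← he]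
    _ = ω ^ 3 := by ring
    _ = 1 := hω3
  -- decomposition existence
  have hdecomp : ∀ z : g, ∃ a ∈ h.toSubmodule, ∃ b ∈ mp, ∃ c ∈ mm, z = a + b + c := by
    intro z
    have htop : h.toSubmodule ⊔ mp ⊔ mm = ⊤ := by
      rw [← hds.submodule_iSup_eq_top]
      apply le_antisymm
      · refine sup_le (sup_le ?_ ?_) ?_
        · exact le_iSup (fun i : Fin 3 => ![h.toSubmodule, mp, mm] i) 0
        · exact le_iSup (fun i : Fin 3 => ![h.toSubmodule, mp, mm] i) 1
        · exact le_iSup (fun i : Fin 3 => ![h.toSubmodule, mp, mm] i) 2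
      · apply iSup_le
        intro i
        fin_cases i
        · exact le_sup_of_le_left le_sup_left
        · exact le_sup_of_le_left le_sup_right
        · exact le_sup_right
    have hz : z ∈ h.toSubmodule ⊔ mp ⊔ mm := htop ▸ Submodule.mem_top
    obtain ⟨u, hu, c, hc, huz⟩ := Submodule.mem_sup.mp hz
    obtain ⟨a, ha, b, hb, hab⟩ := Submodule.mem_sup.mp hu
    exact ⟨a, ha, b, hb, c, hc, by rw [← huz, ← hab]⟩
  -- uniqueness
  have huniq : ∀ a ∈ h.toSubmodule, ∀ b ∈ mp, ∀ c ∈ mm,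
      a + b + c = 0 → a = 0 ∧ b = 0 ∧ c = 0 := by
    intro a ha b hb c hc habc
    have hind := hds.submodule_iSupIndep
    have hle : ∀ (i j : Fin 3), i ≠ j →
        ![h.toSubmodule, mp, mm] i ≤ ⨆ k, ⨆ _ : k ≠ j, ![h.toSubmodule, mp, mm] k :=
      fun i j hij => le_iSup_of_le i (le_iSup_of_le hij le_rfl)
    have h0 : a = 0 := by
      have hd := hind 0
      have ha2 : a ∈ ⨆ k, ⨆ _ : k ≠ (0 : Fin 3), ![h.toSubmodule, mp, mm] k := by
        have h' : a = -(b + c) := by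
          rwa [add_assoc, add_eq_zero_iff_eq_neg] at habc
        rw [h']
        exact neg_mem (add_mem (hle 1 0 (by decide) hb) (hle 2 0 (by decide) hc))
      exact Submodule.disjoint_def.mp hd a ha ha2
    have h1 : b = 0 := by
      have hd := hind 1
      have hb2 : b ∈ ⨆ k, ⨆ _ : k ≠ (1 : Fin 3), ![h.toSubmodule, mp, mm] k := by
        have h' : b = -(a + c) := by
          have : b + (a + c) = 0 := by rw [← habc]; abel
          rwa [add_eq_zero_iff_eq_neg] at this
        rw [h']
        exact neg_mem (add_mem (hle 0 1 (by decide) ha) (hle 2 1 (by decide) hc))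
      exact Submodule.disjoint_def.mp hd b hb hb2
    have h2 : c = 0 := by
      have hd := hind 2
      have hc2 : c ∈ ⨆ k, ⨆ _ : k ≠ (2 : Fin 3), ![h.toSubmodule, mp, mm] k := by
        have h' : c = -(a + b) := by
          have : c + (a + b) = 0 := by rw [← habc]; abel
          rwa [add_eq_zero_iff_eq_neg] at this
        rw [h']
        exact neg_mem (add_mem (hle 0 2 (by decide) ha) (hle 1 2 (by decide) hb))
      exact Submodule.disjoint_def.mp hd c hc hc2
    exact ⟨h0, h1, h2⟩
  -- eigen-separation lemma
  have hsep : ∀ (z : g) (μ : ℂ), f z = μ • z →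
      ∃ a ∈ h.toSubmodule, ∃ b ∈ mp, ∃ c ∈ mm, z = a + b + c ∧
        (1 - μ) • a = 0 ∧ (ω - μ) • b = 0 ∧ (ω ^ 2 - μ) • c = 0 := by
    intro z μ hz
    obtain ⟨a, ha, b, hb, c, hc, hzd⟩ := hdecomp z
    have hfz : f z = a + ω • b + ω ^ 2 • c := by
      rw [hzd, map_add, map_add, hfh a ha, hfp b hb, hfm c hc]
    have heq : (1 - μ) • a + (ω - μ) • b + (ω ^ 2 - μ) • c = 0 := by
      have : a + ω • b + ω ^ 2 • c = μ • (a + b + c) := by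
        rw [← hfz, ← hzd, hz]
      rw [smul_add, smul_add] at this
      rw [show (1 - μ) • a + (ω - μ) • b + (ω ^ 2 - μ) • c =
        (a + ω • b + ω ^ 2 • c) - (μ • a + μ • b + μ • c) by module, this, sub_self]
    have := huniq _ (Submodule.smul_mem _ _ ha) _ (Submodule.smul_mem _ _ hb) _
      (Submodule.smul_mem _ _ hc) heq
    exact ⟨a, ha, b, hb, c, hc, hzd, this.1, this.2.1, this.2.2⟩
  constructor
  · intro hf
    refine ⟨?_, ?_, ?_⟩
    · -- [mp, mp] ⊆ mm
      intro x hx y hy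
      have hz : f ⁅x, y⁆ = ω ^ 2 • ⁅x, y⁆ := by
        rw [hf, hfp x hx, hfp y hy, smul_lie, lie_smul, smul_smul, sq]
      obtain ⟨a, ha, b, hb, c, hc, hzd, ha0, hb0, hc0⟩ := hsep _ _ hz
      have ha' : a = 0 := by
        rcases smul_eq_zero.mp ha0 with h' | h'
        · exact absurd (sub_eq_zero.mp h').symm hω2
        · exact h'
      have hb' : b = 0 := by
        rcases smul_eq_zero.mp hb0 with h' | h'
        · exact absurd (sub_eq_zero.mp h') hωω2
        · exact h'
      rw [hzd, ha', hb', zero_add, zero_add]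
      exact hc
    · -- [mm, mm] ⊆ mp
      intro x hx y hy
      have hz : f ⁅x, y⁆ = ω • ⁅x, y⁆ := by
        rw [hf, hfm x hx, hfm y hy, smul_lie, lie_smul, smul_smul]
        congr 1
        calc ω ^ 2 * ω ^ 2 = ω ^ 3 * ω := by ring
        _ = ω := by rw [hω3, one_mul]
      obtain ⟨a, ha, b, hb, c, hc, hzd, ha0, hb0, hc0⟩ := hsep _ _ hz
      have ha' : a = 0 := by
        rcases smul_eq_zero.mp ha0 with h' | h'
        · exact absurd (sub_eq_zero.mp h').symm hω1
        · exact h'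
      have hc' : c = 0 := by
        rcases smul_eq_zero.mp hc0 with h' | h'
        · exact absurd (sub_eq_zero.mp h').symm hωω2
        · exact h'
      rw [hzd, ha', hc', zero_add, add_zero]
      exact hb
    · -- [mp, mm] ⊆ h
      intro x hx y hy
      have hz : f ⁅x, y⁆ = (1 : ℂ) • ⁅x, y⁆ := by
        rw [hf, hfp x hx, hfm y hy, smul_lie, lie_smul, smul_smul]
        congr 1
        calc ω * ω ^ 2 = ω ^ 3 := by ring
        _ = 1 := hω3
      obtain ⟨a, ha, b, hb, c, hc, hzd, ha0, hb0, hc0⟩ := hsep _ _ hz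
      have hb' : b = 0 := by
        rcases smul_eq_zero.mp hb0 with h' | h'
        · exact absurd (sub_eq_zero.mp h') hω1
        · exact h'
      have hc' : c = 0 := by
        rcases smul_eq_zero.mp hc0 with h' | h'
        · exact absurd (sub_eq_zero.mp h') hω2
        · exact h'
      rw [hzd, hb', hc', add_zero, add_zero]
      exact ha
  · rintro ⟨Hpp, Hmm, Hpm⟩ x y
    obtain ⟨a1, ha1, b1, hb1, c1, hc1, hx⟩ := hdecomp x
    obtain ⟨a2, ha2, b2, hb2, c2, hc2, hy⟩ := hdecomp y
    subst hx hy
    have e11 : f ⁅a1, a2⁆ = ⁅f a1, f a2⁆ := by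
      rw [hfh _ ha1, hfh _ ha2, hfh _ (h.lie_mem ha1 ha2)]
    have e12 : f ⁅a1, b2⁆ = ⁅f a1, f b2⁆ := by
      rw [hfh _ ha1, hfp _ hb2, hfp _ (hhp _ ha1 _ hb2), lie_smul]
    have e13 : f ⁅a1, c2⁆ = ⁅f a1, f c2⁆ := by
      rw [hfh _ ha1, hfm _ hc2, hfm _ (hhm _ ha1 _ hc2), lie_smul]
    have e21 : f ⁅b1, a2⁆ = ⁅f b1, f a2⁆ := by
      have hm : ⁅b1, a2⁆ ∈ mp := by
        rw [← lie_skew]; exact neg_mem (hhp _ ha2 _ hb1)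
      rw [hfp _ hb1, hfh _ ha2, hfp _ hm, smul_lie]
    have e31 : f ⁅c1, a2⁆ = ⁅f c1, f a2⁆ := by
      have hm : ⁅c1, a2⁆ ∈ mm := by
        rw [← lie_skew]; exact neg_mem (hhm _ ha2 _ hc1)
      rw [hfm _ hc1, hfh _ ha2, hfm _ hm, smul_lie]
    have e22 : f ⁅b1, b2⁆ = ⁅f b1, f b2⁆ := by
      rw [hfp _ hb1, hfp _ hb2, hfm _ (Hpp _ hb1 _ hb2), smul_lie, lie_smul,
        smul_smul, sq]
    have e33 : f ⁅c1, c2⁆ = ⁅f c1, f c2⁆ := by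
      rw [hfp _ (Hmm _ hc1 _ hc2), hfm _ hc1, hfm _ hc2, smul_lie, lie_smul, smul_smul]
      congr 1
      calc ω = ω ^ 3 * ω := by rw [hω3, one_mul]
      _ = ω ^ 2 * ω ^ 2 := by ring
    have e23 : f ⁅b1, c2⁆ = ⁅f b1, f c2⁆ := by
      rw [hfh _ (Hpm _ hb1 _ hc2), hfp _ hb1, hfm _ hc2, smul_lie, lie_smul, smul_smul]
      rw [show ω * ω ^ 2 = 1 by rw [← pow_succ']; exact hω3, one_smul]
    have e32 : f ⁅c1, b2⁆ = ⁅f c1, f b2⁆ := by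
      have hm : ⁅c1, b2⁆ ∈ h := by
        rw [← lie_skew]; exact neg_mem (Hpm _ hb2 _ hc1)
      rw [hfh _ hm, hfm _ hc1, hfp _ hb2, smul_lie, lie_smul, smul_smul]
      rw [show ω ^ 2 * ω = 1 by rw [← pow_succ]; exact hω3, one_smul]
    simp only [map_add, lie_add, add_lie]
    rw [e11, e12, e13, e21, e22, e23, e31, e32, e33]
end

section
/- Let g be a finite-dimensional real Lie algebra equipped with an inner product ⟨·,·⟩, and let h ⊆ g be a Lie subalgebra such that ad(x) is skew-adjoint for every x ∈ h, i.e. ⟨⁅x,y⁆, z⟩ + ⟨y, ⁅x,z⁆⟩ = 0 for all x ∈ h and all y, z ∈ g. Let n = {y ∈ g : ⁅y, h⁆ ⊆ h} be the normalizer of h in g and let c = {y ∈ n : ⁅x, y⁆ = 0 for all x ∈ h} be the centralizer of h inside n. Then n = h + c; moreover h ∩ c equals the center of h, so the sum is direct whenever h has trivial center (in particular whenever h is semisimple). -/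
/-!
Positivity of `B` makes `g = h ⊕ h^⊥`, and skewness of `ad h` makes `h^⊥` an `ad h`-invariant
subspace. Write a normalizing element as `y = a + b` with `a ∈ h`, `b ∈ h^⊥`: then `b` still
normalizes `h`, so for `x ∈ h` the bracket `⁅x, b⁆` lies in `h ∩ h^⊥ = 0`.
-/

namespace LinearMap.BilinForm

variable {K V : Type*} [Field K] [AddCommGroup V] [Module K V] {B : LinearMap.BilinForm K V}

theorem disjoint_orthogonal_of_anisotropic (hB : ∀ x, B x x = 0 → x = 0) (W : Submodule K V) :
    Disjoint W (B.orthogonal W) :=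
  Submodule.disjoint_def.mpr fun x hxW hxW' => hB x (hxW' x hxW)

theorem isCompl_orthogonal_of_anisotropic [FiniteDimensional K V] (hB₀ : B.IsRefl)
    (hB : ∀ x, B x x = 0 → x = 0) (W : Submodule K V) : IsCompl W (B.orthogonal W) :=
  (isCompl_orthogonal_iff_disjoint hB₀).mpr (disjoint_orthogonal_of_anisotropic hB W)

end LinearMap.BilinForm

namespace LieSubalgebra

open LinearMap.BilinForm

variable {K L : Type*} [Field K] [LieRing L] [LieAlgebra K L]
  {B : LinearMap.BilinForm K L} {H : LieSubalgebra K L}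

theorem lie_mem_orthogonal (hskew : ∀ x ∈ H, ∀ y z : L, B ⁅x, y⁆ z + B y ⁅x, z⁆ = 0)
    {x b : L} (hx : x ∈ H) (hb : b ∈ B.orthogonal H.toSubmodule) :
    ⁅x, b⁆ ∈ B.orthogonal H.toSubmodule := by
  intro z hz
  have hxz : B ⁅x, z⁆ b = 0 := hb _ (H.lie_mem hx hz)
  have := hskew x hx z b
  rw [hxz, zero_add] at this
  exact this

theorem lie_eq_zero_of_mem_normalizer_of_mem_orthogonal (hB : ∀ x, B x x = 0 → x = 0)
    (hskew : ∀ x ∈ H, ∀ y z : L, B ⁅x, y⁆ z + B y ⁅x, z⁆ = 0)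
    {x b : L} (hx : x ∈ H) (hbH : b ∈ H.normalizer) (hb : b ∈ B.orthogonal H.toSubmodule) :
    ⁅x, b⁆ = 0 :=
  Submodule.disjoint_def.mp (disjoint_orthogonal_of_anisotropic hB H.toSubmodule) _
    ((H.mem_normalizer_iff' b).mp hbH x hx) (lie_mem_orthogonal hskew hx hb)

theorem exists_add_of_mem_normalizer [FiniteDimensional K L] (hB₀ : B.IsRefl)
    (hB : ∀ x, B x x = 0 → x = 0) (hskew : ∀ x ∈ H, ∀ y z : L, B ⁅x, y⁆ z + B y ⁅x, z⁆ = 0)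
    {y : L} (hy : y ∈ H.normalizer) :
    ∃ a ∈ H, ∃ b ∈ H.normalizer, (∀ x ∈ H, ⁅x, b⁆ = 0) ∧ y = a + b := by
  have hy' : y ∈ H.toSubmodule ⊔ B.orthogonal H.toSubmodule := by
    rw [(isCompl_orthogonal_of_anisotropic hB₀ hB H.toSubmodule).sup_eq_top]
    exact Submodule.mem_top
  obtain ⟨a, ha, b, hb, rfl⟩ := Submodule.mem_sup.mp hy'
  have hbH : b ∈ H.normalizer := by
    simpa using H.normalizer.sub_mem hy (H.le_normalizer ha)
  exact ⟨a, ha, b, hbH,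
    fun x hx => lie_eq_zero_of_mem_normalizer_of_mem_orthogonal hB hskew hx hbH hb, rfl⟩

end LieSubalgebra

/-- let `g` be a finite-dimensional real Lie algebra with an inner product
`B` (symmetric, positive definite) such that `ad x` is skew-adjoint for every `x` in a
subalgebra `h`.  Let `n = {y : ⁅y, h⁆ ⊆ h}` be the normalizer of `h` and
`c = {y ∈ n : ⁅h, y⁆ = 0}` the centralizer of `h` inside `n`.  Then `n = h + c`;
moreover `h ∩ c` is the center of `h`, so the sum is direct when `h` has trivial
center. -/
theorem stmt_3 (g : Type*) [LieRing g] [LieAlgebra ℝ g] [FiniteDimensional ℝ g]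
    (B : g →ₗ[ℝ] g →ₗ[ℝ] ℝ)
    (hBsymm : ∀ x y : g, B x y = B y x)
    (hBpos : ∀ x : g, x ≠ 0 → 0 < B x x)
    (h : LieSubalgebra ℝ g)
    (hskew : ∀ x ∈ h, ∀ y z : g, B ⁅x, y⁆ z + B y ⁅x, z⁆ = 0) :
    -- n = h + c
    (∀ y : g, (∀ x ∈ h, ⁅y, x⁆ ∈ h) →
      ∃ a ∈ h, ∃ b : g, (∀ x ∈ h, ⁅b, x⁆ ∈ h) ∧ (∀ x ∈ h, ⁅x, b⁆ = 0) ∧ y = a + b) ∧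
    -- h ∩ c = center of h
    (∀ y : g,
      (y ∈ h ∧ (∀ x ∈ h, ⁅y, x⁆ ∈ h) ∧ (∀ x ∈ h, ⁅x, y⁆ = 0)) ↔
      (y ∈ h ∧ ∀ x ∈ h, ⁅x, y⁆ = 0)) ∧
    -- the sum is direct whenever h has trivial center
    ((∀ y ∈ h, (∀ x ∈ h, ⁅x, y⁆ = 0) → y = 0) →
      ∀ y : g, y ∈ h → (∀ x ∈ h, ⁅y, x⁆ ∈ h) → (∀ x ∈ h, ⁅x, y⁆ = 0) → y = 0) := by
  have hBrefl : (B : LinearMap.BilinForm ℝ g).IsRefl := fun x y hxy => (hBsymm y x).trans hxy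
  have hBaniso : ∀ x : g, B x x = 0 → x = 0 :=
    fun x hx => not_not.mp fun hne => (hBpos x hne).ne' hx
  refine ⟨fun y hy => ?_,
    fun y => ⟨fun ⟨hy, _, hc⟩ => ⟨hy, hc⟩, fun ⟨hy, hc⟩ => ⟨hy, fun x => h.lie_mem hy, hc⟩⟩,
    fun htriv y hy _ hc => htriv y hy hc⟩
  obtain ⟨a, ha, b, hb, hbc, rfl⟩ :=
    h.exists_add_of_mem_normalizer hBrefl hBaniso hskew ((h.mem_normalizer_iff y).mpr hy)
  exact ⟨a, ha, b, (h.mem_normalizer_iff b).mp hb, hbc, rfl⟩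
end

section
/- Let g be a Lie algebra over a field K, h ⊆ g a Lie subalgebra, and m ⊆ g a subspace with g = h ⊕ m as vector spaces and ⁅h, m⁆ ⊆ m; let π_h and π_m denote the projections of g onto h and m determined by this decomposition. Let n ⊆ m be a subspace, and set v = π_h(span{⁅x,y⁆ : x, y ∈ n}) and l = v + n. Then l is a Lie subalgebra of g if and only if n satisfies the two integrability conditions: π_m(⁅x,y⁆) ∈ n for all x, y ∈ n, and ⁅π_h(⁅x,y⁆), z⁆ ∈ n for all x, y, z ∈ n. -/
/-- for a reductive decomposition `g = h ⊕ m` (with projections `πh`, `πm`)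
and a subspace `n ⊆ m`, setting `v = πh(span ⁅n,n⁆)` and `l = v + n`, the subspace `l`
is a Lie subalgebra of `g` if and only if `n` satisfies the two integrability
conditions `πm ⁅n,n⁆ ⊆ n` and `⁅πh ⁅n,n⁆, n⁆ ⊆ n`. -/
theorem stmt_9 (K : Type*) [Field K] (g : Type*) [LieRing g] [LieAlgebra K g]
    (h : LieSubalgebra K g) (m : Submodule K g)
    (hdisj : h.toSubmodule ⊓ m = ⊥)
    (πh πm : g →ₗ[K] g)
    (hπh : ∀ x : g, πh x ∈ h) (hπm : ∀ x : g, πm x ∈ m)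
    (hsum : ∀ x : g, πh x + πm x = x)
    (hhm : ∀ x ∈ h, ∀ y ∈ m, ⁅x, y⁆ ∈ m)
    (n : Submodule K g) (hnm : n ≤ m) :
    let v : Submodule K g :=
      Submodule.map πh (Submodule.span K {z | ∃ x ∈ n, ∃ y ∈ n, z = ⁅x, y⁆})
    let l : Submodule K g := v ⊔ n
    (∀ x ∈ l, ∀ y ∈ l, ⁅x, y⁆ ∈ l) ↔
      ((∀ x ∈ n, ∀ y ∈ n, πm ⁅x, y⁆ ∈ n) ∧
       (∀ x ∈ n, ∀ y ∈ n, ∀ z ∈ n, ⁅πh ⁅x, y⁆, z⁆ ∈ n)) := by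
  intro v l
  have hvh : ∀ u ∈ v, u ∈ h := by
    rintro u ⟨t, -, rfl⟩; exact hπh t
  have hgen : ∀ x ∈ n, ∀ y ∈ n, πh ⁅x, y⁆ ∈ v := fun x hx y hy =>
    ⟨⁅x, y⁆, Submodule.subset_span ⟨x, hx, y, hy, rfl⟩, rfl⟩
  have hnl : n ≤ l := le_sup_right
  have hvl : v ≤ l := le_sup_left
  constructor
  · intro hl
    have hD : ∀ w ∈ l, w ∈ m → w ∈ n := by
      intro w hw hwm
      rcases Submodule.mem_sup.mp hw with ⟨u, hu, z, hz, rfl⟩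
      have hu_m : u ∈ m := by
        have he : u = (u + z) - z := by abel
        rw [he]; exact Submodule.sub_mem m hwm (hnm hz)
      have hu0 : u = 0 := by
        have : u ∈ h.toSubmodule ⊓ m := ⟨hvh u hu, hu_m⟩
        simpa [hdisj] using this
      simpa [hu0] using hz
    constructor
    · intro x hx y hy
      have h2 : ⁅x, y⁆ ∈ l := hl x (hnl hx) y (hnl hy)
      have h3 : πm ⁅x, y⁆ ∈ l := by
        have he : πm ⁅x, y⁆ = ⁅x, y⁆ - πh ⁅x, y⁆ := eq_sub_of_add_eq' (hsum _)
        rw [he]; exact Submodule.sub_mem l h2 (hvl (hgen x hx y hy))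
      exact hD _ h3 (hπm _)
    · intro x hx y hy z hz
      have h2 : ⁅πh ⁅x, y⁆, z⁆ ∈ l := hl _ (hvl (hgen x hx y hy)) z (hnl hz)
      exact hD _ h2 (hhm _ (hπh _) z (hnm hz))
  · rintro ⟨c1, c2⟩
    have hA : ∀ x ∈ n, ∀ y ∈ n, ⁅x, y⁆ ∈ l := by
      intro x hx y hy
      have he : ⁅x, y⁆ = πh ⁅x, y⁆ + πm ⁅x, y⁆ := (hsum _).symm
      rw [he]
      exact Submodule.add_mem l (hvl (hgen x hx y hy)) (hnl (c1 x hx y hy))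
    have hv_span : v = Submodule.span K (πh '' {z | ∃ x ∈ n, ∃ y ∈ n, z = ⁅x, y⁆}) :=
      Submodule.map_span _ _
    have hB : ∀ u ∈ v, ∀ z ∈ n, ⁅u, z⁆ ∈ n := by
      intro u hu
      rw [hv_span] at hu
      induction hu using Submodule.span_induction with
      | mem w hw =>
        rcases hw with ⟨t, ⟨x, hx, y, hy, rfl⟩, rfl⟩
        exact fun z hz => c2 x hx y hy z hz
      | zero => intro z hz; simp
      | add a b _ _ ha hb =>
        intro z hz; rw [add_lie]; exact n.add_mem (ha z hz) (hb z hz)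
      | smul c a _ ha =>
        intro z hz; rw [smul_lie]; exact n.smul_mem c (ha z hz)
    have hC : ∀ u ∈ v, ∀ w ∈ v, ⁅u, w⁆ ∈ l := by
      intro u hu w hw
      rw [hv_span] at hw
      induction hw using Submodule.span_induction with
      | mem w' hw' =>
        rcases hw' with ⟨t, ⟨a, ha, b, hb, rfl⟩, rfl⟩
        have hq : πm ⁅a, b⁆ ∈ n := c1 a ha b hb
        have he : ⁅u, πh ⁅a, b⁆⁆ = ⁅⁅u, a⁆, b⁆ + ⁅a, ⁅u, b⁆⁆ - ⁅u, πm ⁅a, b⁆⁆ := by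
          have h1 : πh ⁅a, b⁆ = ⁅a, b⁆ - πm ⁅a, b⁆ := eq_sub_of_add_eq (hsum _)
          rw [h1, lie_sub, leibniz_lie]
        rw [he]
        exact Submodule.sub_mem l
          (Submodule.add_mem l (hA _ (hB u hu a ha) b hb) (hA a ha _ (hB u hu b hb)))
          (hnl (hB u hu _ hq))
      | zero => simp
      | add a b _ _ ha hb => rw [lie_add]; exact l.add_mem ha hb
      | smul c a _ ha => rw [lie_smul]; exact l.smul_mem c ha
    intro x hx y hy
    rcases Submodule.mem_sup.mp hx with ⟨u, hu, z, hz, rfl⟩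
    rcases Submodule.mem_sup.mp hy with ⟨u', hu', z', hz', rfl⟩
    rw [add_lie, lie_add, lie_add]
    have t1 : ⁅u, u'⁆ ∈ l := hC u hu u' hu'
    have t2 : ⁅u, z'⁆ ∈ l := hnl (hB u hu z' hz')
    have t3 : ⁅z, u'⁆ ∈ l := by
      have : ⁅z, u'⁆ = -⁅u', z⁆ := (neg_eq_iff_eq_neg.mpr (lie_skew u' z).symm).symm
      rw [this]; exact l.neg_mem (hnl (hB u' hu' z hz))
    have t4 : ⁅z, z'⁆ ∈ l := hA z hz z' hz'
    exact l.add_mem (l.add_mem t1 t2) (l.add_mem t3 t4)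
end

section
/- Let g be a Lie algebra over a field K, h ⊆ g a Lie subalgebra, and m ⊆ g a subspace with g = h ⊕ m as vector spaces and ⁅h, m⁆ ⊆ m; let π_h and π_m denote the projections of g onto h and m determined by this decomposition. Let q be a symmetric bilinear form on g which is invariant, i.e. q(⁅x,y⁆, z) = −q(y, ⁅x,z⁆) for all x, y, z ∈ g, and which satisfies q(h, m) = 0. Let n ⊆ m be maximal isotropic in m, i.e. n = {x ∈ m : q(x, y) = 0 for all y ∈ n}, and set v = π_h(span{⁅x,y⁆ : x, y ∈ n}). Then the condition '⁅π_h(⁅x,y⁆), z⁆ ∈ n for all x, y, z ∈ n' holds if and only if q(w, w') = 0 for all w, w' ∈ v. -/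
/-- for a reductive decomposition `g = h ⊕ m` with an invariant symmetric
bilinear form `q` such that `q(h,m) = 0`, and `n ⊆ m` maximal isotropic in `m`, the
second integrability condition `⁅πh ⁅n,n⁆, n⁆ ⊆ n` holds if and only if
`v = πh(span ⁅n,n⁆)` is `q`-isotropic. -/
theorem stmt_10 (K : Type*) [Field K] (g : Type*) [LieRing g] [LieAlgebra K g]
    (h : LieSubalgebra K g) (m : Submodule K g)
    (hdisj : h.toSubmodule ⊓ m = ⊥)
    (πh πm : g →ₗ[K] g)
    (hπh : ∀ x : g, πh x ∈ h) (hπm : ∀ x : g, πm x ∈ m)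
    (hsum : ∀ x : g, πh x + πm x = x)
    (hhm : ∀ x ∈ h, ∀ y ∈ m, ⁅x, y⁆ ∈ m)
    (q : g →ₗ[K] g →ₗ[K] K)
    (hqsymm : ∀ x y : g, q x y = q y x)
    (hqinv : ∀ x y z : g, q ⁅x, y⁆ z = - q y ⁅x, z⁆)
    (hqhm : ∀ x ∈ h, ∀ y ∈ m, q x y = 0)
    (n : Submodule K g)
    (hmaxiso : ∀ x : g, x ∈ n ↔ (x ∈ m ∧ ∀ y ∈ n, q x y = 0)) :
    let v : Submodule K g :=
      Submodule.map πh (Submodule.span K {z | ∃ x ∈ n, ∃ y ∈ n, z = ⁅x, y⁆})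
    (∀ x ∈ n, ∀ y ∈ n, ∀ z ∈ n, ⁅πh ⁅x, y⁆, z⁆ ∈ n) ↔
      (∀ w ∈ v, ∀ w' ∈ v, q w w' = 0) := by
  intro v
  have hnm : ∀ x ∈ n, x ∈ m := fun x hx => ((hmaxiso x).1 hx).1
  -- key identity: for a ∈ h, q ⁅a,z⁆ w = q a (πh ⁅z,w⁆)
  have key : ∀ a, a ∈ h → ∀ z w : g, q ⁅a, z⁆ w = q a (πh ⁅z, w⁆) := by
    intro a ha z w
    have h2 : (⁅a, z⁆ : g) = -⁅z, a⁆ := (lie_skew a z).symm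
    have h1 : q ⁅a, z⁆ w = q a ⁅z, w⁆ := by
      rw [h2, map_neg, LinearMap.neg_apply, hqinv z a w, neg_neg]
    rw [h1]
    have hdecomp := hsum ⁅z, w⁆
    calc q a ⁅z, w⁆ = q a (πh ⁅z, w⁆ + πm ⁅z, w⁆) := by rw [hdecomp]
      _ = q a (πh ⁅z, w⁆) + q a (πm ⁅z, w⁆) := by rw [map_add]
      _ = q a (πh ⁅z, w⁆) := by rw [hqhm a ha _ (hπm _), add_zero]
  set S : Set g := {z | ∃ x ∈ n, ∃ y ∈ n, z = ⁅x, y⁆} with hS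
  constructor
  · intro H w hw w' hw'
    obtain ⟨u, hu, rfl⟩ := hw
    obtain ⟨u', hu', rfl⟩ := hw'
    -- reduce to generators by bilinearity
    have main : ∀ u ∈ Submodule.span K S, ∀ u' ∈ Submodule.span K S,
        q (πh u) (πh u') = 0 := by
      intro u hu
      induction hu using Submodule.span_induction with
      | mem a hamem =>
        intro u' hu'
        induction hu' using Submodule.span_induction with
        | mem b hbmem =>
          obtain ⟨x, hx, y, hy, rfl⟩ := hamem
          obtain ⟨z, hz, w, hw, rfl⟩ := hbmem
          have hbr : ⁅πh ⁅x, y⁆, z⁆ ∈ n := H x hx y hy z hz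
          have := key (πh ⁅x, y⁆) (hπh _) z w
          rw [← this]
          exact ((hmaxiso _).1 hbr).2 w hw
        | zero => simp
        | add b c hb hc ihb ihc => rw [map_add, map_add, ihb, ihc, add_zero]
        | smul t b hb ihb => rw [map_smul, map_smul, smul_eq_mul, ihb, mul_zero]
      | zero => intro u' hu'; simp
      | add a b ha hb iha ihb =>
        intro u' hu'
        rw [map_add, map_add, LinearMap.add_apply, iha u' hu', ihb u' hu', add_zero]
      | smul t a ha iha =>
        intro u' hu'
        rw [map_smul, map_smul, LinearMap.smul_apply, iha u' hu', smul_zero]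
    exact main u hu u' hu'
  · intro hv x hx y hy z hz
    rw [hmaxiso]
    refine ⟨hhm _ (hπh _) z (hnm z hz), ?_⟩
    intro w hw
    rw [key (πh ⁅x, y⁆) (hπh _) z w]
    have h1 : πh ⁅x, y⁆ ∈ v :=
      ⟨⁅x, y⁆, Submodule.subset_span ⟨x, hx, y, hy, rfl⟩, rfl⟩
    have h2 : πh ⁅z, w⁆ ∈ v :=
      ⟨⁅z, w⁆, Submodule.subset_span ⟨z, hz, w, hw, rfl⟩, rfl⟩
    exact hv _ h1 _ h2
end

section
/- Let g be a Lie algebra over a field K, h ⊆ g a Lie subalgebra, and m ⊆ g a subspace with g = h ⊕ m as vector spaces and ⁅h, m⁆ ⊆ m; let π_h and π_m denote the projections of g onto h and m determined by this decomposition. Let n ⊆ m be a subspace satisfying the two integrability conditions: π_m(⁅x,y⁆) ∈ n for all x, y ∈ n, and ⁅π_h(⁅x,y⁆), z⁆ ∈ n for all x, y, z ∈ n. Set l = n + span{⁅x,y⁆ : x, y ∈ n} and k = {x ∈ h : ⁅x, z⁆ ∈ n for all z ∈ n}. Then k + l is a Lie subalgebra of g and ⁅k + l, l⁆ ⊆ l,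 i.e. l is a Lie ideal of k + l. -/
/-- for a reductive decomposition `g = h ⊕ m` and a subspace `n ⊆ m`
satisfying the two integrability conditions, setting `l = n + span ⁅n,n⁆` and
`k = {x ∈ h : ⁅x, n⁆ ⊆ n}` (here realized as the span of that set, which is already a
subspace), `k + l = k ⊔ l` is a Lie subalgebra of `g` and `l` is a Lie ideal of it. -/
theorem stmt_12 (K : Type*) [Field K] (g : Type*) [LieRing g] [LieAlgebra K g]
    (h : LieSubalgebra K g) (m : Submodule K g)
    (hdisj : h.toSubmodule ⊓ m = ⊥)
    (πh πm : g →ₗ[K] g)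
    (hπh : ∀ x : g, πh x ∈ h) (hπm : ∀ x : g, πm x ∈ m)
    (hsum : ∀ x : g, πh x + πm x = x)
    (hhm : ∀ x ∈ h, ∀ y ∈ m, ⁅x, y⁆ ∈ m)
    (n : Submodule K g) (hnm : n ≤ m)
    (hint1 : ∀ x ∈ n, ∀ y ∈ n, πm ⁅x, y⁆ ∈ n)
    (hint2 : ∀ x ∈ n, ∀ y ∈ n, ∀ z ∈ n, ⁅πh ⁅x, y⁆, z⁆ ∈ n) :
    let l : Submodule K g :=
      n ⊔ Submodule.span K {z | ∃ x ∈ n, ∃ y ∈ n, z = ⁅x, y⁆}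
    let k : Submodule K g :=
      Submodule.span K {x | x ∈ h ∧ ∀ z ∈ n, ⁅x, z⁆ ∈ n}
    (∀ x ∈ k ⊔ l, ∀ y ∈ k ⊔ l, ⁅x, y⁆ ∈ k ⊔ l) ∧
    (∀ x ∈ k ⊔ l, ∀ y ∈ l, ⁅x, y⁆ ∈ l) := by
  intro l k
  -- K0 : the set defining k, as a submodule
  let K0 : Submodule K g :=
    { carrier := {x | x ∈ h ∧ ∀ z ∈ n, ⁅x, z⁆ ∈ n}
      add_mem' := fun {a b} ha hb =>
        ⟨h.add_mem ha.1 hb.1, fun z hz => by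
          rw [add_lie]; exact n.add_mem (ha.2 z hz) (hb.2 z hz)⟩
      zero_mem' := ⟨h.zero_mem, fun z hz => by rw [zero_lie]; exact n.zero_mem⟩
      smul_mem' := fun c x hx =>
        ⟨h.smul_mem c hx.1, fun z hz => by rw [smul_lie]; exact n.smul_mem c (hx.2 z hz)⟩ }
  have hkK0 : k = K0 := by
    apply le_antisymm
    · exact Submodule.span_le.2 (fun x hx => hx)
    · exact fun x hx => Submodule.subset_span hx
  have hnl : n ≤ l := le_sup_left
  have hSl : Submodule.span K {z | ∃ x ∈ n, ∃ y ∈ n, z = ⁅x, y⁆} ≤ l := le_sup_right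
  -- (A) brackets of K0 with l land in l
  have hA : ∀ a ∈ K0, ∀ w ∈ l, ⁅a, w⁆ ∈ l := by
    intro a ha w hw
    have hle : l ≤ Submodule.comap (LieAlgebra.ad K g a) l := by
      apply sup_le
      · intro u hu
        simp only [Submodule.mem_comap, LieAlgebra.ad_apply]
        exact hnl (ha.2 u hu)
      · rw [Submodule.span_le]
        rintro z ⟨x, hx, y, hy, rfl⟩
        simp only [Submodule.mem_comap, LieAlgebra.ad_apply, SetLike.mem_coe]
        rw [leibniz_lie]
        refine l.add_mem ?_ ?_
        · exact hSl (Submodule.subset_span ⟨⁅a, x⁆, ha.2 x hx, y, hy, rfl⟩)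
        · exact hSl (Submodule.subset_span ⟨x, hx, ⁅a, y⁆, ha.2 y hy, rfl⟩)
    have := hle hw
    simpa only [Submodule.mem_comap, LieAlgebra.ad_apply] using this
  -- (B) brackets of n with l land in l
  have hB : ∀ u ∈ n, ∀ w ∈ l, ⁅u, w⁆ ∈ l := by
    intro u hu w hw
    have hle : l ≤ Submodule.comap (LieAlgebra.ad K g u) l := by
      apply sup_le
      · intro v hv
        simp only [Submodule.mem_comap, LieAlgebra.ad_apply]
        exact hSl (Submodule.subset_span ⟨u, hu, v, hv, rfl⟩)
      · rw [Submodule.span_le]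
        rintro z ⟨x, hx, y, hy, rfl⟩
        simp only [Submodule.mem_comap, LieAlgebra.ad_apply, SetLike.mem_coe]
        have hdec : ⁅x, y⁆ = πh ⁅x, y⁆ + πm ⁅x, y⁆ := (hsum _).symm
        rw [hdec, lie_add]
        refine l.add_mem ?_ ?_
        · have : ⁅u, πh ⁅x, y⁆⁆ = -⁅πh ⁅x, y⁆, u⁆ := (lie_skew _ _).symm
          rw [this]
          exact hnl (n.neg_mem (hint2 x hx y hy u hu))
        · exact hSl (Submodule.subset_span ⟨u, hu, πm ⁅x, y⁆, hint1 x hx y hy, rfl⟩)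
    have := hle hw
    simpa only [Submodule.mem_comap, LieAlgebra.ad_apply] using this
  -- l ≤ K0 ⊔ n
  have hlK0n : l ≤ K0 ⊔ n := by
    apply sup_le
    · exact le_sup_right
    · rw [Submodule.span_le]
      rintro z ⟨x, hx, y, hy, rfl⟩
      have hdec : ⁅x, y⁆ = πh ⁅x, y⁆ + πm ⁅x, y⁆ := (hsum _).symm
      rw [hdec]
      refine Submodule.add_mem _ ?_ ?_
      · exact Submodule.mem_sup_left ⟨hπh _, fun z hz => hint2 x hx y hy z hz⟩
      · exact Submodule.mem_sup_right (hint1 x hx y hy)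
  -- k ⊔ l ≤ K0 ⊔ n
  have hkl : k ⊔ l ≤ K0 ⊔ n := by
    apply sup_le
    · rw [hkK0]; exact le_sup_left
    · exact hlK0n
  -- the ideal property
  have hideal : ∀ x ∈ k ⊔ l, ∀ w ∈ l, ⁅x, w⁆ ∈ l := by
    intro x hx w hw
    obtain ⟨a, ha, u, hu, rfl⟩ := Submodule.mem_sup.1 (hkl hx)
    rw [add_lie]
    exact l.add_mem (hA a ha w hw) (hB u hu w hw)
  refine ⟨?_, hideal⟩
  intro x hx y hy
  obtain ⟨a, ha, u, hu, rfl⟩ := Submodule.mem_sup.1 (hkl hx)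
  obtain ⟨b, hb, v, hv, rfl⟩ := Submodule.mem_sup.1 (hkl hy)
  have h1 : ⁅a, b⁆ ∈ K0 := by
    refine ⟨h.lie_mem ha.1 hb.1, fun z hz => ?_⟩
    rw [lie_lie]
    exact n.sub_mem (ha.2 _ (hb.2 z hz)) (hb.2 _ (ha.2 z hz))
  have h2 : ⁅a, v⁆ ∈ l := hA a ha v (hnl hv)
  have h3 : ⁅u, b⁆ ∈ l := by
    have : ⁅u, b⁆ = -⁅b, u⁆ := (lie_skew _ _).symm
    rw [this]
    exact l.neg_mem (hnl (hb.2 u hu))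
  have h4 : ⁅u, v⁆ ∈ l := hSl (Submodule.subset_span ⟨u, hu, v, hv, rfl⟩)
  have : ⁅a + u, b + v⁆ = ⁅a, b⁆ + (⁅a, v⁆ + (⁅u, b⁆ + ⁅u, v⁆)) := by
    rw [add_lie, lie_add, lie_add]; abel
  rw [this]
  refine Submodule.add_mem _ ?_ ?_
  · exact Submodule.mem_sup_left (Submodule.subset_span h1)
  · exact Submodule.mem_sup_right (l.add_mem h2 (l.add_mem h3 h4))
end

section
/- Let g be a Lie algebra over a field K, h ⊆ g a Lie subalgebra, and m ⊆ g a subspace with g = h ⊕ m as vector spaces and ⁅h, m⁆ ⊆ m; let π_h and π_m denote the projections of g onto h and m determined by this decomposition. Let q be a symmetric bilinear form on g which is invariant, i.e. q(⁅x,y⁆, z) = −q(y, ⁅x,z⁆) for all x, y, z ∈ g, and which satisfies q(h, m) = 0. Let n ⊆ m be maximal isotropic in m, i.e. n = {x ∈ m : q(x, y) = 0 for all y ∈ n}, and suppose n satisfies the two integrability conditions: π_m(⁅x,y⁆) ∈ n for all x, y ∈ n, and ⁅π_h(⁅x,y⁆), z⁆ ∈ n for all x, y, z ∈ n. Then the subspace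 l = n + span{⁅x,y⁆ : x, y ∈ n} is q-isotropic: q(u, w) = 0 for all u, w ∈ l. -/
/-- for a reductive decomposition `g = h ⊕ m` with an invariant symmetric
bilinear form `q` satisfying `q(h,m) = 0`, and `n ⊆ m` maximal isotropic in `m`
satisfying the two integrability conditions, the subspace `l = n + span ⁅n,n⁆` is
`q`-isotropic. -/
theorem stmt_13 (K : Type*) [Field K] (g : Type*) [LieRing g] [LieAlgebra K g]
    (h : LieSubalgebra K g) (m : Submodule K g)
    (hdisj : h.toSubmodule ⊓ m = ⊥)
    (πh πm : g →ₗ[K] g)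
    (hπh : ∀ x : g, πh x ∈ h) (hπm : ∀ x : g, πm x ∈ m)
    (hsum : ∀ x : g, πh x + πm x = x)
    (hhm : ∀ x ∈ h, ∀ y ∈ m, ⁅x, y⁆ ∈ m)
    (q : g →ₗ[K] g →ₗ[K] K)
    (hqsymm : ∀ x y : g, q x y = q y x)
    (hqinv : ∀ x y z : g, q ⁅x, y⁆ z = - q y ⁅x, z⁆)
    (hqhm : ∀ x ∈ h, ∀ y ∈ m, q x y = 0)
    (n : Submodule K g)
    (hmaxiso : ∀ x : g, x ∈ n ↔ (x ∈ m ∧ ∀ y ∈ n, q x y = 0))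
    (hint1 : ∀ x ∈ n, ∀ y ∈ n, πm ⁅x, y⁆ ∈ n)
    (hint2 : ∀ x ∈ n, ∀ y ∈ n, ∀ z ∈ n, ⁅πh ⁅x, y⁆, z⁆ ∈ n) :
    let l : Submodule K g :=
      n ⊔ Submodule.span K {z | ∃ x ∈ n, ∃ y ∈ n, z = ⁅x, y⁆}
    ∀ u ∈ l, ∀ w ∈ l, q u w = 0 := by
  have hqnn : ∀ x ∈ n, ∀ y ∈ n, q x y = 0 := fun x hx y hy => ((hmaxiso x).1 hx).2 y hy
  have hnm : ∀ x ∈ n, x ∈ m := fun x hx => ((hmaxiso x).1 hx).1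
  have key1 : ∀ z ∈ n, ∀ x ∈ n, ∀ y ∈ n, q z ⁅x, y⁆ = 0 := by
    intro z hz x hx y hy
    have : q z ⁅x, y⁆ = q z (πh ⁅x, y⁆) + q z (πm ⁅x, y⁆) := by
      rw [← map_add, hsum]
    rw [this, hqsymm z (πh ⁅x, y⁆), hqhm _ (hπh _) z (hnm z hz),
      hqnn z hz _ (hint1 x hx y hy), add_zero]
  have key2 : ∀ x ∈ n, ∀ y ∈ n, ∀ u ∈ n, ∀ v ∈ n, q ⁅x, y⁆ ⁅u, v⁆ = 0 := by
    intro x hx y hy u hu v hv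
    have h1 : q ⁅x, y⁆ ⁅u, v⁆ = - q v ⁅u, ⁅x, y⁆⁆ := by
      rw [hqsymm]; exact hqinv u v ⁅x, y⁆
    have h2 : ⁅u, ⁅x, y⁆⁆ = -⁅πh ⁅x, y⁆, u⁆ + ⁅u, πm ⁅x, y⁆⁆ := by
      conv_lhs => rw [← hsum ⁅x, y⁆]
      rw [lie_add, ← lie_skew u (πh ⁅x, y⁆)]
    rw [h1, h2, map_add, map_neg,
      hqnn v hv _ (hint2 x hx y hy u hu),
      key1 v hv u hu _ (hint1 x hx y hy)]
    ring
  intro l u hu w hw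
  have step : ∀ a : g, (∀ x ∈ n, q a x = 0) →
      (∀ x ∈ n, ∀ y ∈ n, q a ⁅x, y⁆ = 0) → ∀ w ∈ l, q a w = 0 := by
    intro a h1 h2 w hw
    have hle : l ≤ LinearMap.ker (q a) := by
      apply sup_le
      · intro x hx
        exact h1 x hx
      · rw [Submodule.span_le]
        rintro z ⟨x, hx, y, hy, rfl⟩
        exact h2 x hx y hy
    exact hle hw
  have final : l ≤ ⨅ w ∈ l, LinearMap.ker (q.flip w) := by
    apply sup_le
    · intro x hx
      simp only [Submodule.mem_iInf, LinearMap.mem_ker, LinearMap.flip_apply]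
      intro w hw
      exact step x (fun y hy => hqnn x hx y hy)
        (fun y hy z hz => key1 x hx y hy z hz) w hw
    · rw [Submodule.span_le]
      rintro z ⟨x, hx, y, hy, rfl⟩
      simp only [SetLike.mem_coe, Submodule.mem_iInf, LinearMap.mem_ker, LinearMap.flip_apply]
      intro w hw
      exact step _ (fun a ha => by rw [hqsymm]; exact key1 a ha x hx y hy)
        (fun a ha b hb => key2 x hx y hy a ha b hb) w hw
  have := final hu
  simp only [Submodule.mem_iInf, LinearMap.mem_ker, LinearMap.flip_apply] at this
  exact this w hw
end

section
/- Let g be a Lie algebra over a field K, h ⊆ g a Lie subalgebra, and m ⊆ g a subspace with g = h ⊕ m as vector spaces and ⁅h, m⁆ ⊆ m; let π_h and π_m denote the projections of g onto h and m determined by this decomposition. Let l ⊆ g be a Lie subalgebra such that l = (l ∩ h) + (l ∩ m), and set n = l ∩ m. Then n satisfies the two integrability conditions: π_m(⁅x,y⁆) ∈ n for all x, y ∈ n, and ⁅π_h(⁅x,y⁆), z⁆ ∈ n for all x, y, z ∈ n. -/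
/-- for a reductive decomposition `g = h ⊕ m` and a Lie subalgebra `l`
(a subspace closed under the bracket) splitting as `l = (l ∩ h) + (l ∩ m)`, the
subspace `n = l ∩ m` satisfies the two integrability conditions
`πm ⁅n,n⁆ ⊆ n` and `⁅πh ⁅n,n⁆, n⁆ ⊆ n`. -/
theorem stmt_14 (K : Type*) [Field K] (g : Type*) [LieRing g] [LieAlgebra K g]
    (h : LieSubalgebra K g) (m : Submodule K g)
    (hdisj : h.toSubmodule ⊓ m = ⊥)
    (πh πm : g →ₗ[K] g)
    (hπh : ∀ x : g, πh x ∈ h) (hπm : ∀ x : g, πm x ∈ m)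
    (hsum : ∀ x : g, πh x + πm x = x)
    (hhm : ∀ x ∈ h, ∀ y ∈ m, ⁅x, y⁆ ∈ m)
    (l : Submodule K g)
    (hl : ∀ x ∈ l, ∀ y ∈ l, ⁅x, y⁆ ∈ l)
    (hsplit : l = (l ⊓ h.toSubmodule) ⊔ (l ⊓ m)) :
    let n : Submodule K g := l ⊓ m
    (∀ x ∈ n, ∀ y ∈ n, πm ⁅x, y⁆ ∈ n) ∧
    (∀ x ∈ n, ∀ y ∈ n, ∀ z ∈ n, ⁅πh ⁅x, y⁆, z⁆ ∈ n) := by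
  intro n
  -- πm vanishes on h, πh vanishes on m
  have keyh : ∀ a : g, a ∈ h → πm a = 0 ∧ πh a = a := by
    intro a ha
    have h1 : πm a ∈ h.toSubmodule ⊓ m := by
      refine ⟨?_, hπm a⟩
      have : πm a = a - πh a := by
        exact eq_sub_of_add_eq' (hsum a)
      rw [this]
      exact Submodule.sub_mem _ ha (hπh a)
    rw [hdisj] at h1
    have h0 : πm a = 0 := by simpa using h1
    have := hsum a
    constructor
    · exact h0
    · rw [h0, add_zero] at this; exact this
  have keym : ∀ a : g, a ∈ m → πh a = 0 ∧ πm a = a := by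
    intro a ha
    have h1 : πh a ∈ h.toSubmodule ⊓ m := by
      refine ⟨hπh a, ?_⟩
      have : πh a = a - πm a := by
        exact eq_sub_of_add_eq (hsum a)
      rw [this]
      exact Submodule.sub_mem _ ha (hπm a)
    rw [hdisj] at h1
    have h0 : πh a = 0 := by simpa using h1
    have := hsum a
    exact ⟨h0, by rw [h0, zero_add] at this; exact this⟩
  -- key decomposition of brackets
  have key : ∀ x ∈ n, ∀ y ∈ n, πh ⁅x, y⁆ ∈ l ⊓ h.toSubmodule ∧ πm ⁅x, y⁆ ∈ n := by
    intro x hx y hy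
    have hb : ⁅x, y⁆ ∈ l := hl x hx.1 y hy.1
    rw [hsplit] at hb
    obtain ⟨a, ha, b, hb', hab⟩ := Submodule.mem_sup.mp hb
    have e1 : πh ⁅x, y⁆ = a := by
      rw [← hab, map_add, (keyh a ha.2).2, (keym b hb'.2).1, add_zero]
    have e2 : πm ⁅x, y⁆ = b := by
      rw [← hab, map_add, (keyh a ha.2).1, (keym b hb'.2).2, zero_add]
    exact ⟨e1 ▸ ha, e2 ▸ hb'⟩
  constructor
  · intro x hx y hy
    exact (key x hx y hy).2
  · intro x hx y hy z hz
    obtain ⟨hal, hah⟩ := (key x hx y hy).1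
    exact ⟨hl _ hal z hz.1, hhm _ hah z hz.2⟩
end
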